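/- Let τ be an infinite cardinal, let X be a τ-paracompact normal T1 space, and let E be a Banach space with topological weight w(E) ≤ τ. Then every lower semicontinuous set-valued mapping φ : X → F(E) whose values are nonempty closed convex subsets of E has a continuous selection. -/

import Mathlib

open Set Metric Filter Topology Cardinal Pointwise

universe u v

/-- A set-valued mapping is lower semicontinuous if the preimage
`φ⁻¹(U) = {x | φ x ∩ U ≠ ∅}` is open for every open `U`. -/
def LowerSemicontinuousSV {X : Type*} {E : Type*} [TopologicalSpace X] [TopologicalSpace E]
    (φ : X → Set E) : Prop :=
  ∀ U : Set E, IsOpen U → IsOpen {x : X | (φ x ∩ U).Nonempty}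

/-- The topological weight: the least cardinality of a base of the topology. -/
noncomputable def topWeight (E : Type v) [TopologicalSpace E] : Cardinal.{v} :=
  ⨅ B : {B : Set (Set E) // TopologicalSpace.IsTopologicalBasis B}, Cardinal.mk B.1

/-- A `T₁` space is `τ`-paracompact if every open cover of cardinality at most
`τ` has a locally finite open refinement (which is again a cover). -/
def TauParacompact (X : Type u) [TopologicalSpace X] (τ : Cardinal.{u}) : Prop :=
  ∀ 𝒰 : Set (Set X), Cardinal.mk 𝒰 ≤ τ → (∀ U ∈ 𝒰, IsOpen U) → ⋃₀ 𝒰 = Set.univ →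
    ∃ 𝒱 : Set (Set X), (∀ V ∈ 𝒱, IsOpen V) ∧ ⋃₀ 𝒱 = Set.univ ∧
      LocallyFinite (fun V : 𝒱 => (V : Set X)) ∧ ∀ V ∈ 𝒱, ∃ U ∈ 𝒰, V ⊆ U

lemma exists_dense_card_le {E : Type v} [TopologicalSpace E] {τ : Cardinal.{v}}
    (hw : topWeight E ≤ τ) : ∃ D : Set E, Dense D ∧ Cardinal.mk D ≤ τ := by
  have hne : Nonempty {B : Set (Set E) // TopologicalSpace.IsTopologicalBasis B} :=
    ⟨⟨_, TopologicalSpace.isTopologicalBasis_opens⟩⟩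
  obtain ⟨B, hB⟩ := ciInf_mem (fun B : {B : Set (Set E) // TopologicalSpace.IsTopologicalBasis B}
    => Cardinal.mk B.1)
  have hBle : Cardinal.mk B.1 ≤ τ := hB.trans_le hw
  set S : Set (Set E) := {b ∈ B.1 | b.Nonempty} with hS
  let c : S → E := fun b => b.2.2.some
  refine ⟨range c, ?_, (Cardinal.mk_range_le).trans ((Cardinal.mk_le_mk_of_subset
    (Set.sep_subset _ _)).trans hBle)⟩
  rw [dense_iff_inter_open]
  intro U hU ⟨x, hx⟩
  obtain ⟨b, hbB, hxb, hbU⟩ := B.2.exists_subset_of_mem_open hx hU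
  have hbne : b.Nonempty := ⟨x, hxb⟩
  exact ⟨c ⟨b, hbB, hbne⟩, hbU (⟨b, hbB, hbne⟩ : S).2.2.some_mem, mem_range_self _⟩

lemma lsc_inter_ball {X E : Type*} [TopologicalSpace X] [NormedAddCommGroup E]
    {φ : X → Set E} (hφ : LowerSemicontinuousSV φ) {f : X → E} (hf : Continuous f)
    {ε : ℝ} :
    LowerSemicontinuousSV (fun x => φ x ∩ ball (f x) ε) := by
  intro U hU
  rw [isOpen_iff_mem_nhds]
  rintro x0 ⟨z, ⟨hzφ, hzb⟩, hzU⟩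
  rw [mem_ball] at hzb
  set δ : ℝ := (ε - dist z (f x0)) / 2 with hδ
  have hδpos : 0 < δ := by simp [hδ]; linarith
  have hW1 : IsOpen {x | (φ x ∩ (ball z δ ∩ U)).Nonempty} :=
    hφ _ (isOpen_ball.inter hU)
  have hW2 : IsOpen (f ⁻¹' ball (f x0) δ) := hf.isOpen_preimage _ isOpen_ball
  refine Filter.mem_of_superset (((hW1.inter hW2).mem_nhds ?_)) ?_
  · exact ⟨⟨z, ⟨hzφ, mem_ball_self hδpos, hzU⟩⟩, by simp [mem_ball_self hδpos]⟩
  · rintro x ⟨⟨z', hz'φ, ⟨hz'b, hz'U⟩⟩, hx2⟩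
    refine ⟨z', ⟨hz'φ, ?_⟩, hz'U⟩
    rw [mem_ball] at *
    have h1 : dist z' (f x) ≤ dist z' z + dist z (f x0) + dist (f x0) (f x) :=
      dist_triangle4 _ _ _ _
    have hx2' : dist (f x0) (f x) < δ := by
      rw [mem_preimage, mem_ball, dist_comm] at hx2; exact hx2
    linarith

lemma approx_selection {τ : Cardinal.{u}} {X : Type u} [TopologicalSpace X] [NormalSpace X]
    (hX : TauParacompact X τ) {E : Type u} [NormedAddCommGroup E] [NormedSpace ℝ E]
    {D : Set E} (hD : Dense D) (hDc : Cardinal.mk D ≤ τ)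
    {ψ : X → Set E} (hne : ∀ x, (ψ x).Nonempty) (hconv : ∀ x, Convex ℝ (ψ x))
    (hlsc : LowerSemicontinuousSV ψ) {ε : ℝ} (hε : 0 < ε) :
    ∃ f : X → E, Continuous f ∧ ∀ x, ∃ z ∈ ψ x, dist (f x) z < ε := by
  set Uy : E → Set X := fun y => {x | (ψ x ∩ ball y ε).Nonempty} with hUy
  have hUyo : ∀ y, IsOpen (Uy y) := fun y => hlsc _ isOpen_ball
  obtain ⟨𝒱, h𝒱o, h𝒱cov, h𝒱lf, h𝒱ref⟩ := hX (Uy '' D)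
    ((Cardinal.mk_image_le).trans hDc)
    (by rintro _ ⟨y, -, rfl⟩; exact hUyo y)
    (by
      apply eq_univ_iff_forall.2
      intro x
      obtain ⟨z, hz⟩ := hne x
      obtain ⟨y, hyD, hdyz⟩ := hD.exists_dist_lt z hε
      exact ⟨Uy y, mem_image_of_mem _ hyD, ⟨z, hz, mem_ball.2 hdyz⟩⟩)
  set U : ↥𝒱 → Set X := fun V => (V : Set X) with hU
  have hUniv : (univ : Set X) ⊆ ⋃ i, U i := by
    rw [← sUnion_eq_iUnion, h𝒱cov]
  obtain ⟨b, hb⟩ := BumpCovering.exists_isSubordinate_of_locallyFinite isClosed_univ U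
    (fun i => h𝒱o i i.2) h𝒱lf hUniv
  set ρ := b.toPartitionOfUnity with hρdef
  have hρ : ρ.IsSubordinate U := hb.toPartitionOfUnity
  have hgex : ∀ i : ↥𝒱, ∃ y : E, (i : Set X) ⊆ Uy y := by
    intro i
    obtain ⟨W, hW𝒰, hsub⟩ := h𝒱ref i i.2
    obtain ⟨y, -, rfl⟩ := hW𝒰
    exact ⟨y, hsub⟩
  choose g hg using hgex
  refine ⟨fun x => ∑ᶠ i, ρ i x • g i, ρ.continuous_finsum_smul
    (fun i x _ => continuousAt_const), ?_⟩
  intro x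
  have key : ∀ i ∈ ρ.finsupport x, g i ∈ ψ x + ball (0:E) ε := by
    intro i hi
    have hxi : x ∈ U i := hρ i (subset_tsupport _ ((ρ.mem_finsupport x).1 hi))
    obtain ⟨z, hzψ, hzb⟩ := hg i hxi
    have : g i - z ∈ ball (0 : E) ε := by
      rw [mem_ball_zero_iff, ← dist_eq_norm, dist_comm]
      exact mem_ball.1 hzb
    simpa using Set.add_mem_add hzψ this
  have hsupp : Function.support (fun i => ρ i x • g i) ⊆ ↑(ρ.finsupport x) := by
    rw [ρ.coe_finsupport x]
    intro i hi
    simp only [Function.mem_support] at hi ⊢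
    exact fun h => hi (by simp [h])
  have hfx : (∑ᶠ i, ρ i x • g i) ∈ ψ x + ball (0:E) ε := by
    rw [finsum_eq_sum_of_support_subset _ hsupp]
    exact ((hconv x).add (convex_ball 0 ε)).sum_mem (fun i _ => ρ.nonneg i x)
      (ρ.sum_finsupport (mem_univ x)) key
  obtain ⟨z, hz, w, hw, hzw⟩ := mem_add.1 hfx
  refine ⟨z, hz, ?_⟩
  have : dist (∑ᶠ i, ρ i x • g i) z = ‖w‖ := by
    rw [← hzw, dist_eq_norm]; simp
  rw [this]
  exact mem_ball_zero_iff.1 hw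

/-- Nedev: convex-valued selections on τ-paracompact normal
spaces, for Banach spaces of weight at most τ. -/
theorem convex_selection_tauParacompact
    (τ : Cardinal.{u}) (hτ : Cardinal.aleph0 ≤ τ)
    (X : Type u) [TopologicalSpace X] [T1Space X] [NormalSpace X]
    (hX : TauParacompact X τ)
    (E : Type u) [NormedAddCommGroup E] [NormedSpace ℝ E] [CompleteSpace E]
    (hw : topWeight E ≤ τ)
    (φ : X → Set E)
    (hφval : ∀ x, (φ x).Nonempty ∧ IsClosed (φ x) ∧ Convex ℝ (φ x))
    (hφ : LowerSemicontinuousSV φ) :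
    ∃ f : X → E, Continuous f ∧ ∀ x, f x ∈ φ x := by
  obtain ⟨D, hD, hDc⟩ := exists_dense_card_le hw
  have hpow : ∀ n : ℕ, (0:ℝ) < (1/2:ℝ)^n := fun n => pow_pos (by norm_num) n
  set P : ℕ → (X → E) → Prop :=
    fun n f => Continuous f ∧ ∀ x, (φ x ∩ ball (f x) ((1/2:ℝ)^n)).Nonempty with hP
  -- base case
  obtain ⟨f0, hf0c, hf0⟩ := approx_selection hX hD hDc (fun x => (hφval x).1)
    (fun x => (hφval x).2.2) hφ (hpow 0)
  have hbase : P 0 f0 := by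
    refine ⟨hf0c, fun x => ?_⟩
    obtain ⟨z, hz, hd⟩ := hf0 x
    exact ⟨z, hz, mem_ball'.2 hd⟩
  -- inductive step
  have step : ∀ n (f : X → E), P n f →
      ∃ g : X → E, P (n+1) g ∧ ∀ x, dist (g x) (f x) ≤ (3/2) * (1/2:ℝ)^n := by
    intro n f hf
    have hlsc' : LowerSemicontinuousSV (fun x => φ x ∩ ball (f x) ((1/2:ℝ)^n)) :=
      lsc_inter_ball hφ hf.1
    obtain ⟨g, hgc, hg⟩ := approx_selection hX hD hDc hf.2
      (fun x => ((hφval x).2.2.inter (convex_ball _ _))) hlsc' (hpow (n+1))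
    refine ⟨g, ⟨hgc, fun x => ?_⟩, fun x => ?_⟩
    · obtain ⟨z, ⟨hzφ, _⟩, hd⟩ := hg x
      exact ⟨z, hzφ, mem_ball'.2 hd⟩
    · obtain ⟨z, ⟨_, hzb⟩, hd⟩ := hg x
      have h1 : dist (g x) (f x) ≤ dist (g x) z + dist z (f x) := dist_triangle _ _ _
      have h2 : dist z (f x) < (1/2:ℝ)^n := mem_ball.1 hzb
      have h3 : (1/2:ℝ)^(n+1) + (1/2:ℝ)^n = (3/2) * (1/2:ℝ)^n := by ring
      nlinarith [hd, h2, h1]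
  -- construct the sequence
  let seq : ∀ n : ℕ, {f : X → E // P n f} := fun n =>
    Nat.rec ⟨f0, hbase⟩
      (fun n fp => ⟨Classical.choose (step n fp.1 fp.2),
        (Classical.choose_spec (step n fp.1 fp.2)).1⟩) n
  set F : ℕ → X → E := fun n => (seq n).1 with hF
  have hFc : ∀ n, Continuous (F n) := fun n => (seq n).2.1
  have hFφ : ∀ n x, (φ x ∩ ball (F n x) ((1/2:ℝ)^n)).Nonempty := fun n => (seq n).2.2
  have hFd : ∀ n x, dist (F (n+1) x) (F n x) ≤ (3/2) * (1/2:ℝ)^n :=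
    fun n => (Classical.choose_spec (step n (seq n).1 (seq n).2)).2
  have hFd' : ∀ x n, dist (F n x) (F (n+1) x) ≤ (3/2) * (1/2:ℝ)^n :=
    fun x n => by rw [dist_comm]; exact hFd n x
  have hcau : ∀ x, CauchySeq (fun n => F n x) := fun x =>
    cauchySeq_of_le_geometric (1/2) (3/2) (by norm_num) (hFd' x)
  have hlim : ∀ x, ∃ y : E, Tendsto (fun n => F n x) atTop (𝓝 y) := fun x =>
    cauchySeq_tendsto_of_complete (hcau x)
  choose f hf using hlim
  have hdistlim : ∀ x n, dist (F n x) (f x) ≤ 3 * (1/2:ℝ)^n := by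
    intro x n
    have := dist_le_of_le_geometric_of_tendsto (1/2) (3/2) (by norm_num) (hFd' x) (hf x) n
    calc dist (F n x) (f x) ≤ 3/2 * (1/2:ℝ)^n / (1 - 1/2) := this
    _ = 3 * (1/2:ℝ)^n := by ring
  have htu : TendstoUniformly F f atTop := by
    rw [Metric.tendstoUniformly_iff]
    intro ε hε
    have h0 : Tendsto (fun n : ℕ => 3 * (1/2:ℝ)^n) atTop (𝓝 0) := by
      simpa using (tendsto_pow_atTop_nhds_zero_of_lt_one (by norm_num) (by norm_num : (1/2:ℝ) < 1)).const_mul 3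
    filter_upwards [h0.eventually (gt_mem_nhds hε)] with n hn x
    rw [dist_comm]
    exact (hdistlim x n).trans_lt hn
  have hfc : Continuous f := htu.continuous (Eventually.of_forall hFc).frequently
  refine ⟨f, hfc, fun x => ?_⟩
  have hinf : ∀ n, infDist (f x) (φ x) ≤ 4 * (1/2:ℝ)^n := by
    intro n
    obtain ⟨z, hzφ, hzb⟩ := hFφ n x
    have h1 : infDist (F n x) (φ x) ≤ dist (F n x) z := infDist_le_dist_of_mem hzφ
    have h2 : dist (F n x) z < (1/2:ℝ)^n := by
      rw [dist_comm]; exact mem_ball.1 hzb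
    have h3 : infDist (f x) (φ x) ≤ infDist (F n x) (φ x) + dist (f x) (F n x) :=
      infDist_le_infDist_add_dist
    have h4 : dist (f x) (F n x) ≤ 3 * (1/2:ℝ)^n := by
      rw [dist_comm]; exact hdistlim x n
    nlinarith
  have hzero : infDist (f x) (φ x) = 0 := by
    refine le_antisymm ?_ infDist_nonneg
    have h0 : Tendsto (fun n : ℕ => 4 * (1/2:ℝ)^n) atTop (𝓝 0) := by
      simpa using (tendsto_pow_atTop_nhds_zero_of_lt_one (by norm_num)
        (by norm_num : (1/2:ℝ) < 1)).const_mul 4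
    exact ge_of_tendsto' h0 hinf
  exact ((hφval x).2.1.mem_iff_infDist_zero (hφval x).1).2 hzero
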